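/- arXiv:0906.3645 — 3 statements merged into one kernel-verified Lean document; each statement's English description precedes it below -/
import Mathlib

section
/- Let G be a group of nilpotency class at most 2 and let s be a natural number. Then for every x in G, the following are equivalent: (1) x is central in (G, ∘ₛ), i.e., x ∘ₛ y = y ∘ₛ x for all y in G; (2) ⁅x,y⁆^{2s+1} = 1 for all y in G; (3) x^{2s+1} lies in the center Z(G) of G. -/
/-- The commutator `[x,y] = x⁻¹y⁻¹xy` as used in the paper. -/
def pcomm {G : Type*} [Group G] (x y : G) : G := x⁻¹ * y⁻¹ * x * y

/-- The operation `x ∘ₛ y := [x,y]^s x y` of the paper. -/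
def opn {G : Type*} [Group G] (s : ℕ) (x y : G) : G := (pcomm x y) ^ s * x * y

/-- In a group of nilpotency class at most 2, for `x : G`:
`x` is central in `(G, ∘ₛ)` ↔ `[x,y]^(2s+1) = 1` for all `y` ↔ `x^(2s+1) ∈ Z(G)`. -/
theorem stmt_7 {G : Type*} [Group G]
    (hG : ∀ x y z : G, pcomm (pcomm x y) z = 1) (s : ℕ) (x : G) :
    ((∀ y : G, opn s x y = opn s y x) ↔ (∀ y : G, (pcomm x y) ^ (2 * s + 1) = 1)) ∧
    ((∀ y : G, (pcomm x y) ^ (2 * s + 1) = 1) ↔ x ^ (2 * s + 1) ∈ Subgroup.center G) := by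
  -- commutator-equals-one iff commuting
  have hiff : ∀ a b : G, pcomm a b = 1 ↔ a * b = b * a := by
    intro a b
    constructor
    · intro h
      calc a * b = b * a * (a⁻¹ * b⁻¹ * a * b) := by group
        _ = b * a * pcomm a b := rfl
        _ = b * a := by rw [h, mul_one]
    · intro h
      simp only [pcomm, mul_assoc, h]
      group
  -- commutators are central
  have hc : ∀ a b z : G, pcomm a b * z = z * pcomm a b := by
    intro a b z
    have h := (hiff (pcomm a b) z).mp (hG a b z)
    exact h
  -- pcomm (x^n) y = (pcomm x y)^n
  have key : ∀ (y : G) (n : ℕ), pcomm (x ^ n) y = (pcomm x y) ^ n := by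
    intro y n
    induction n with
    | zero => simp [pcomm]
    | succ n ih =>
      have e1 : pcomm (x ^ (n + 1)) y = x⁻¹ * pcomm (x ^ n) y * (y⁻¹ * x * y) := by
        simp only [pcomm, pow_succ]
        group
      have e2 : x⁻¹ * pcomm (x ^ n) y = pcomm (x ^ n) y * x⁻¹ := (hc _ _ _).symm
      rw [e1, e2, ih, pow_succ]
      simp only [pcomm]
      group
  -- pcomm y x = (pcomm x y)⁻¹
  have hinv : ∀ y : G, pcomm y x = (pcomm x y)⁻¹ := by
    intro y; simp only [pcomm]; group
  constructor
  · -- first iff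
    have main : ∀ y : G, opn s x y = opn s y x ↔ (pcomm x y) ^ (2 * s + 1) = 1 := by
      intro y
      set c := pcomm x y with hcdef
      have hyx : y * x = c⁻¹ * (x * y) := by
        have h1 : y * x = x * y * c⁻¹ := by simp only [hcdef, pcomm]; group
        have hcom : Commute c (x * y) := hc x y (x * y)
        rw [h1, (hcom.inv_left.symm).eq]
      have hright : opn s y x = c⁻¹ ^ (s + 1) * x * y := by
        rw [opn, hinv y, ← hcdef]
        have h1 : c⁻¹ ^ s * y * x = c⁻¹ ^ s * (y * x) := by group
        rw [h1, hyx, ← mul_assoc, ← mul_assoc, ← pow_succ]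
      rw [opn, hright]
      constructor
      · intro h
        have h2 : c ^ s = c⁻¹ ^ (s + 1) := by
          have := mul_right_cancel (mul_right_cancel h)
          exact this
        have : c ^ s * c ^ (s + 1) = 1 := by
          rw [h2, inv_pow, inv_mul_cancel]
        calc c ^ (2 * s + 1) = c ^ s * c ^ (s + 1) := by rw [← pow_add]; ring_nf
          _ = 1 := this
      · intro h
        have h2 : c ^ s = c⁻¹ ^ (s + 1) := by
          rw [inv_pow, eq_inv_iff_mul_eq_one, ← pow_add]
          convert h using 2
          ring
        rw [h2]
    constructor
    · intro h y; exact (main y).mp (h y)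
    · intro h y; exact (main y).mpr (h y)
  · -- second iff
    rw [Subgroup.mem_center_iff]
    constructor
    · intro h g
      have h1 : pcomm (x ^ (2 * s + 1)) g = 1 := by rw [key]; exact h g
      exact ((hiff _ _).mp h1).symm
    · intro h y
      rw [← key]
      exact (hiff _ _).mpr (h y).symm
end

section
/- Let p be an odd prime, let G be a group of nilpotency class at most 2, and let i be a natural number. Set s(i) = (p^i − 1)/2 and s(i+1) = (p^{i+1} − 1)/2. Then for every x in G: x is central in (G, ∘_{s(i+1)}) (i.e., x ∘_{s(i+1)} y = y ∘_{s(i+1)} x for all y) if and only if x^p is central in (G, ∘_{s(i)}) (i.e., x^p ∘_{s(i)} y = y ∘_{s(i)} x^p for all y). Equivalently, x is central in (G, ∘_{s(i)}) if and only if x^{p^i} ∈ Z(G). -/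
section aux
variable {G : Type*} [Group G]

lemma pcomm_eq_one_iff (a b : G) : pcomm a b = 1 ↔ b * a = a * b := by
  unfold pcomm
  constructor
  · intro h
    calc b * a = b * a * (a⁻¹ * b⁻¹ * a * b) := by rw [h, mul_one]
      _ = a * b := by group
  · intro h
    calc a⁻¹ * b⁻¹ * a * b = a⁻¹ * b⁻¹ * (a * b) := by group
      _ = a⁻¹ * b⁻¹ * (b * a) := by rw [h]
      _ = 1 := by group

lemma pcomm_central (hG : ∀ x y z : G, pcomm (pcomm x y) z = 1) (x y z : G) :
    Commute (pcomm x y) z := by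
  have h := (pcomm_eq_one_iff (pcomm x y) z).mp (hG x y z)
  exact h.symm

lemma pcomm_pow (hG : ∀ x y z : G, pcomm (pcomm x y) z = 1) (x y : G) (n : ℕ) :
    pcomm (x ^ n) y = (pcomm x y) ^ n := by
  induction n with
  | zero => simp [pcomm]
  | succ n ih =>
    have key : pcomm (x ^ n * x) y = x⁻¹ * pcomm (x ^ n) y * x * pcomm x y := by
      unfold pcomm
      group
    have hcn : (pcomm x y) ^ n * x = x * (pcomm x y) ^ n :=
      ((pcomm_central hG x y x).pow_left n).eq
    rw [pow_succ, key, ih]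
    calc x⁻¹ * (pcomm x y) ^ n * x * pcomm x y
        = x⁻¹ * ((pcomm x y) ^ n * x) * pcomm x y := by group
      _ = x⁻¹ * (x * (pcomm x y) ^ n) * pcomm x y := by rw [hcn]
      _ = (pcomm x y) ^ n * pcomm x y := by group
      _ = (pcomm x y) ^ (n + 1) := (pow_succ _ _).symm

lemma opn_comm_iff (hG : ∀ x y z : G, pcomm (pcomm x y) z = 1) (s : ℕ) (x y : G) :
    opn s x y = opn s y x ↔ (pcomm x y) ^ (2 * s + 1) = 1 := by
  have hyx : pcomm y x = (pcomm x y)⁻¹ := by unfold pcomm; group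
  have hxy : y * x = x * y * (pcomm x y)⁻¹ := by unfold pcomm; group
  have hC : ∀ z : G, Commute (pcomm x y) z := pcomm_central hG x y
  unfold opn
  rw [hyx]
  have hR : (pcomm x y)⁻¹ ^ s * y * x = ((pcomm x y) ^ (s + 1))⁻¹ * (x * y) := by
    rw [mul_assoc, hxy,
      show x * y * (pcomm x y)⁻¹ = (pcomm x y)⁻¹ * (x * y) from ((hC (x * y)).inv_left.eq).symm,
      ← mul_assoc, ← pow_succ, inv_pow]
  rw [hR, mul_assoc ((pcomm x y) ^ s), mul_left_inj, eq_inv_iff_mul_eq_one, ← pow_add,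
    show s + (s + 1) = 2 * s + 1 by omega]

end aux

/-- Let `p` be an odd prime, `G` of nilpotency class at most 2,
`s(i) = (p^i - 1)/2`. Then `x` is central in `(G, ∘_{s(i+1)})` iff `x^p` is central in
`(G, ∘_{s(i)})`; equivalently, `x` is central in `(G, ∘_{s(i)})` iff `x^(p^i) ∈ Z(G)`. -/
theorem stmt_8 {G : Type*} [Group G]
    (hG : ∀ x y z : G, pcomm (pcomm x y) z = 1)
    (p : ℕ) (hp : p.Prime) (hodd : Odd p) (i : ℕ) (x : G) :
    ((∀ y : G, opn ((p ^ (i + 1) - 1) / 2) x y = opn ((p ^ (i + 1) - 1) / 2) y x) ↔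
      (∀ y : G, opn ((p ^ i - 1) / 2) (x ^ p) y = opn ((p ^ i - 1) / 2) y (x ^ p))) ∧
    ((∀ y : G, opn ((p ^ i - 1) / 2) x y = opn ((p ^ i - 1) / 2) y x) ↔
      x ^ (p ^ i) ∈ Subgroup.center G) := by
  have hexp : ∀ k : ℕ, 2 * ((p ^ k - 1) / 2) + 1 = p ^ k := by
    intro k
    obtain ⟨m, hm⟩ := hodd.pow (n := k)
    omega
  have hcond : ∀ (k : ℕ) (a : G),
      (∀ y : G, opn ((p ^ k - 1) / 2) a y = opn ((p ^ k - 1) / 2) y a) ↔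
      (∀ y : G, (pcomm a y) ^ (p ^ k) = 1) := by
    intro k a
    constructor
    · intro h y
      rw [← hexp k]
      exact (opn_comm_iff hG _ a y).mp (h y)
    · intro h y
      refine (opn_comm_iff hG _ a y).mpr ?_
      rw [hexp k]; exact h y
  constructor
  · rw [hcond (i + 1) x, hcond i (x ^ p)]
    constructor
    · intro h y
      rw [pcomm_pow hG, ← pow_mul, ← pow_succ']
      exact h y
    · intro h y
      have := h y
      rwa [pcomm_pow hG, ← pow_mul, ← pow_succ'] at this
  · rw [hcond i x, Subgroup.mem_center_iff]
    constructor
    · intro h y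
      have := h y
      rw [← pcomm_pow hG, pcomm_eq_one_iff] at this
      exact this
    · intro h y
      rw [← pcomm_pow hG, pcomm_eq_one_iff]
      exact h y
end

section
/- Let G be a group of nilpotency class at most 2 and let s, n be natural numbers. If x, y in G satisfy ⁅x,y⁆^{2s+1} = 1, then x ∘_{(2s+1)n+s} y = x ∘ₛ y. (Consequently, the center of (G, ∘ₛ) is closed under the operation ∘_{(2s+1)n+s}, i.e., Z(S_n^i(G)) is a subgroup, indeed a normal subgroup, of S_n^{i+1}(G).) -/
/-- In a group of nilpotency class at most 2, if `[x,y]^(2s+1) = 1`, then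
`x ∘_((2s+1)n+s) y = x ∘ₛ y`. -/
theorem stmt_9 {G : Type*} [Group G]
    (hG : ∀ x y z : G, pcomm (pcomm x y) z = 1) (s n : ℕ) (x y : G)
    (h : (pcomm x y) ^ (2 * s + 1) = 1) :
    opn ((2 * s + 1) * n + s) x y = opn s x y := by
  simp [opn, pow_add, pow_mul, h]
end
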